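/- arXiv:2110.01321 — 4 statements merged into one kernel-verified Lean document; each statement's English description precedes it below -/
import Mathlib

section
/- For all a with 0 < a ≤ 1/2 and all x with 0 < x ≤ 1, the incomplete Beta function satisfies a·B_x(a, 1−a) ≥ (1/x − 1)^(1/2 − a) · arcsin(√x). -/
open Real MeasureTheory

/-- The incomplete Beta function `B_x(a,b) = ∫_0^x t^(a-1) (1-t)^(b-1) dt`. -/
noncomputable def incBeta (a b x : ℝ) : ℝ :=
  ∫ t in (0:ℝ)..x, t ^ (a - 1) * (1 - t) ^ (b - 1)

/-!
The difference `F y = a * B_y(a, 1 - a) - (1/y - 1)^(1/2 - a) * arcsin √y` vanishes at `0` and is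
monotone on `[0, 1]`: on `(0, 1)` one computes
`F' y = (1/2 - a) * y^(a-1) * (1-y)^(-a) * (arcsin √y / √(y(1-y)) - 1)`, which is nonnegative
because `arcsin √y ≥ √y ≥ √(y(1-y))`. Continuity of `F` at `0` follows from
`arcsin u ≤ π/2 * u`, which bounds the second term by `π/2 * y^a`.
-/

open intervalIntegral Set Filter Topology

namespace Real

lemma self_le_arcsin {u : ℝ} (h0 : 0 ≤ u) (h1 : u ≤ 1) : u ≤ arcsin u :=
  calc u = sin (arcsin u) := (sin_arcsin (by linarith) h1).symm
    _ ≤ arcsin u := sin_le (arcsin_nonneg.2 h0)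

lemma arcsin_le_pi_div_two_mul {u : ℝ} (h0 : 0 ≤ u) (h1 : u ≤ 1) :
    arcsin u ≤ π / 2 * u := by
  have h := mul_le_sin (arcsin_nonneg.2 h0) (arcsin_le_pi_div_two u)
  rw [sin_arcsin (by linarith) h1, div_mul_eq_mul_div, div_le_iff₀ pi_pos] at h
  linarith

lemma sqrt_mul_one_sub_le_arcsin_sqrt {y : ℝ} (h0 : 0 ≤ y) (h1 : y ≤ 1) :
    √(y * (1 - y)) ≤ arcsin √y :=
  calc √(y * (1 - y)) ≤ √y := sqrt_le_sqrt (by nlinarith)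
    _ ≤ arcsin √y := self_le_arcsin (sqrt_nonneg y) (sqrt_le_one.2 h1)

lemma hasDerivAt_arcsin_sqrt {y : ℝ} (h0 : 0 < y) (h1 : y < 1) :
    HasDerivAt (fun y => arcsin √y) (1 / (2 * √(y * (1 - y)))) y := by
  have hs : √y < 1 := (sqrt_lt_sqrt h0.le h1).trans_eq sqrt_one
  refine ((hasDerivAt_arcsin (by linarith [sqrt_nonneg y]) hs.ne).comp y
    (hasDerivAt_sqrt h0.ne')).congr_deriv ?_
  rw [sq_sqrt h0.le, sqrt_mul h0.le]
  field_simp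

lemma hasDerivAt_one_div_sub_one_rpow (c : ℝ) {y : ℝ} (h0 : 0 < y) (h1 : y < 1) :
    HasDerivAt (fun y => (1 / y - 1) ^ c) (-c * (1 / y - 1) ^ c / (y * (1 - y))) y := by
  have hu : 1 / y - 1 = (1 - y) / y := by field_simp
  have hu0 : 0 < 1 / y - 1 := by rw [hu]; exact div_pos (by linarith) h0
  have h := ((hasDerivAt_inv h0.ne').sub_const 1).rpow_const (p := c)
    (Or.inl (one_div y ▸ hu0.ne'))
  simp only [← one_div] at h
  refine h.congr_deriv ?_
  rw [rpow_sub_one hu0.ne', hu]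
  field_simp

end Real

section IncBeta

variable {a b x : ℝ}

lemma intervalIntegrable_incBeta_integrand_of_lt_one (ha : 0 < a) (hx : x < 1) :
    IntervalIntegrable (fun t => t ^ (a - 1) * (1 - t) ^ (b - 1)) volume 0 x := by
  refine (intervalIntegrable_rpow' (by linarith)).mul_continuousOn ?_
  refine ContinuousOn.rpow_const (f := fun t => 1 - t) (by fun_prop) fun t ht => Or.inl ?_
  linarith [ht.2.trans_lt (max_lt zero_lt_one hx)]

lemma intervalIntegrable_incBeta_integrand (ha : 0 < a) (hb : 0 < b) :
    IntervalIntegrable (fun t => t ^ (a - 1) * (1 - t) ^ (b - 1)) volume 0 1 := by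
  have hright : IntervalIntegrable (fun t => t ^ (a - 1) * (1 - t) ^ (b - 1)) volume (1 / 2) 1 := by
    have h := ((intervalIntegrable_incBeta_integrand_of_lt_one (a := b) (b := a) hb
      (x := 1 / 2) (by norm_num)).comp_sub_left 1).symm
    norm_num at h
    convert h using 1
    ext t
    rw [mul_comm]
  exact (intervalIntegrable_incBeta_integrand_of_lt_one ha (by norm_num)).trans hright

lemma incBeta_zero : incBeta a b 0 = 0 := integral_same

lemma continuousOn_incBeta (ha : 0 < a) (hb : 0 < b) : ContinuousOn (incBeta a b) (Icc 0 1) := by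
  have h := continuousOn_primitive_interval' (intervalIntegrable_incBeta_integrand ha hb)
    left_mem_uIcc
  rwa [uIcc_of_le zero_le_one] at h

lemma hasDerivAt_incBeta (ha : 0 < a) (hx0 : 0 < x) (hx1 : x < 1) :
    HasDerivAt (incBeta a b) (x ^ (a - 1) * (1 - x) ^ (b - 1)) x := by
  have hcont : ContinuousAt (fun t => t ^ (a - 1) * (1 - t) ^ (b - 1)) x :=
    (continuousAt_id.rpow_const (Or.inl hx0.ne')).mul
      ((continuousAt_const.sub continuousAt_id).rpow_const (Or.inl (by simp; linarith)))
  exact integral_hasDerivAt_right (intervalIntegrable_incBeta_integrand_of_lt_one ha hx1)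
    ((by fun_prop : Measurable fun t : ℝ => t ^ (a - 1) * (1 - t) ^ (b - 1))
      |>.aestronglyMeasurable.stronglyMeasurableAtFilter) hcont

end IncBeta

noncomputable def incBetaMinorant (a x : ℝ) : ℝ :=
  (1 / x - 1) ^ ((1:ℝ) / 2 - a) * arcsin √x

section IncBetaMinorant

variable {a y : ℝ}

lemma incBetaMinorant_zero : incBetaMinorant a 0 = 0 := by
  simp [incBetaMinorant]

lemma one_div_sub_one_rpow_eq_mul_sqrt (h0 : 0 < y) (h1 : y < 1) :
    (1 / y - 1) ^ ((1:ℝ) / 2 - a) = y ^ (a - 1) * (1 - y) ^ (-a) * √(y * (1 - y)) := by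
  have h1' : 0 < 1 - y := by linarith
  rw [show 1 / y - 1 = (1 - y) * y⁻¹ by field_simp, mul_rpow h1'.le (inv_nonneg.2 h0.le),
    inv_rpow h0.le, sqrt_eq_rpow, mul_rpow h0.le h1'.le, ← rpow_neg h0.le]
  calc (1 - y) ^ ((1:ℝ) / 2 - a) * y ^ (-((1:ℝ) / 2 - a))
      = (1 - y) ^ (-a + 1 / 2) * y ^ (a - 1 + 1 / 2) := by ring_nf
    _ = _ := by rw [rpow_add h0, rpow_add h1']; ring

lemma hasDerivAt_incBetaMinorant (h0 : 0 < y) (h1 : y < 1) :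
    HasDerivAt (incBetaMinorant a)
      (y ^ (a - 1) * (1 - y) ^ (-a) *
        (1 / 2 - (1 / 2 - a) * (arcsin √y / √(y * (1 - y))))) y := by
  refine ((hasDerivAt_one_div_sub_one_rpow _ h0 h1).mul
    (hasDerivAt_arcsin_sqrt h0 h1)).congr_deriv ?_
  have hs2 := sq_sqrt (mul_nonneg h0.le (by linarith : (0:ℝ) ≤ 1 - y))
  have hs : 0 < √(y * (1 - y)) := sqrt_pos.2 (mul_pos h0 (by linarith))
  rw [one_div_sub_one_rpow_eq_mul_sqrt h0 h1]
  set s := √(y * (1 - y))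
  rw [← hs2]
  field_simp
  ring

lemma incBetaMinorant_le_pi_div_two_mul_rpow (ha : a ≤ 1 / 2) (hy : y ∈ Icc (0:ℝ) 1) :
    incBetaMinorant a y ≤ π / 2 * y ^ a := by
  obtain rfl | h0 := hy.1.eq_or_lt
  · simp [incBetaMinorant]
    positivity
  calc incBetaMinorant a y ≤ (1 / y) ^ ((1:ℝ) / 2 - a) * (π / 2 * √y) := by
        refine mul_le_mul (rpow_le_rpow ?_ (by linarith) (by linarith))
          (arcsin_le_pi_div_two_mul (sqrt_nonneg y) (sqrt_le_one.2 hy.2))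
          (arcsin_nonneg.2 (sqrt_nonneg y)) (by positivity)
        rw [sub_nonneg, le_div_iff₀ h0]
        linarith [hy.2]
    _ = π / 2 * y ^ a := by
        rw [one_div, inv_rpow h0.le, ← rpow_neg h0.le, sqrt_eq_rpow, mul_left_comm,
          ← rpow_add h0]
        ring_nf

lemma incBetaMinorant_nonneg (hy : y ∈ Icc (0:ℝ) 1) : 0 ≤ incBetaMinorant a y := by
  obtain rfl | h0 := hy.1.eq_or_lt
  · simp [incBetaMinorant]
  refine mul_nonneg (rpow_nonneg ?_ _) (arcsin_nonneg.2 (sqrt_nonneg y))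
  rw [sub_nonneg, le_div_iff₀ h0]
  linarith [hy.2]

lemma continuousOn_incBetaMinorant (ha : 0 < a) (ha' : a ≤ 1 / 2) :
    ContinuousOn (incBetaMinorant a) (Icc 0 1) := by
  intro y hy
  obtain rfl | h0 := hy.1.eq_or_lt
  · have hlim : Tendsto (fun y => π / 2 * y ^ a) (𝓝[Icc 0 1] 0) (𝓝 0) := by
      simpa [zero_rpow ha.ne'] using
        ((continuous_rpow_const ha.le).tendsto 0).const_mul (π / 2) |>.mono_left nhdsWithin_le_nhds
    rw [ContinuousWithinAt, incBetaMinorant_zero]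
    exact tendsto_of_tendsto_of_tendsto_of_le_of_le' tendsto_const_nhds hlim
      (eventually_nhdsWithin_of_forall fun y hy => incBetaMinorant_nonneg hy)
      (eventually_nhdsWithin_of_forall fun y hy => incBetaMinorant_le_pi_div_two_mul_rpow ha' hy)
  · refine ContinuousAt.continuousWithinAt ?_
    exact ((continuousAt_const.div continuousAt_id h0.ne').sub continuousAt_const).rpow_const
      (Or.inr (by linarith)) |>.mul (continuous_arcsin.comp continuous_sqrt).continuousAt

end IncBetaMinorant

lemma monotoneOn_incBeta_sub_incBetaMinorant {a : ℝ} (ha : 0 < a) (ha' : a ≤ 1 / 2) :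
    MonotoneOn (fun y => a * incBeta a (1 - a) y - incBetaMinorant a y) (Icc 0 1) := by
  refine monotoneOn_of_hasDerivWithinAt_nonneg
    (f' := fun y => a * (y ^ (a - 1) * (1 - y) ^ (-a)) - y ^ (a - 1) * (1 - y) ^ (-a) *
      (1 / 2 - (1 / 2 - a) * (arcsin √y / √(y * (1 - y)))))
    (convex_Icc 0 1) ?_ (fun y hy => ?_) (fun y hy => ?_)
  · exact (continuousOn_const.mul (continuousOn_incBeta ha (by linarith))).sub
      (continuousOn_incBetaMinorant ha ha')
  · rw [interior_Icc] at hy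
    have h := hasDerivAt_incBeta (b := 1 - a) ha hy.1 hy.2
    rw [sub_sub_cancel_left] at h
    exact ((h.const_mul a).sub (hasDerivAt_incBetaMinorant hy.1 hy.2)).hasDerivWithinAt
  · rw [interior_Icc] at hy
    have hs : 0 < √(y * (1 - y)) := sqrt_pos.2 (mul_pos hy.1 (by linarith [hy.2]))
    have hratio : 1 ≤ arcsin √y / √(y * (1 - y)) :=
      (one_le_div hs).2 (sqrt_mul_one_sub_le_arcsin_sqrt hy.1.le hy.2.le)
    have hw : 0 < y ^ (a - 1) * (1 - y) ^ (-a) :=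
      mul_pos (rpow_pos_of_pos hy.1 _) (rpow_pos_of_pos (by linarith [hy.2]) _)
    calc (0:ℝ) ≤ (1 / 2 - a) * (y ^ (a - 1) * (1 - y) ^ (-a)) *
          (arcsin √y / √(y * (1 - y)) - 1) :=
          mul_nonneg (mul_nonneg (by linarith) hw.le) (by linarith)
      _ = _ := by ring

theorem incBeta_lower_bound (a x : ℝ) (ha : 0 < a) (ha' : a ≤ 1 / 2)
    (hx : 0 < x) (hx' : x ≤ 1) :
    a * incBeta a (1 - a) x ≥ (1 / x - 1) ^ ((1:ℝ) / 2 - a) * Real.arcsin (Real.sqrt x) := by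
  have h := monotoneOn_incBeta_sub_incBetaMinorant ha ha'
    ⟨le_rfl, zero_le_one⟩ ⟨hx.le, hx'⟩ hx.le
  simpa [incBeta_zero, incBetaMinorant_zero, incBetaMinorant] using h
end

section
/- Let A be a self-adjoint operator on a Hilbert space H that is bounded above, generating the semigroup e^{tA}. Let θ > 0, M > 0, and u₀ ∈ H with ‖u₀‖ ≤ M. Then the solution u(t) = e^{tA}u₀ of u' = Au, u(0) = u₀ satisfies ‖u(t)‖ ≤ M^{1 − t/θ} · ‖u(θ)‖^{t/θ} for all 0 ≤ t ≤ θ. -/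
open Real MeasureTheory RealInnerProductSpace

/-!
Along a trajectory `v' = A v` of a symmetric `A`, put `g = ‖v‖²`. Then `g' = 2⟪A v, v⟫` and,
by symmetry, `g'' = 4‖A v‖²`, so Cauchy–Schwarz gives `g'² ≤ g g''`, i.e. `(log g)'' ≥ 0`.
Since `e^{tA}` is invertible, `v = e^{tA} u₀` never vanishes when `u₀ ≠ 0`; hence
`log ‖e^{tA} u₀‖` is convex, and the convexity inequality between `0` and `θ`, exponentiated,
is the claim once `‖u₀‖ ≤ M` is substituted.
-/

lemma convexOn_log_of_hasDerivAt {g g' g'' : ℝ → ℝ}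
    (hg : ∀ s, HasDerivAt g (g' s) s) (hg' : ∀ s, HasDerivAt g' (g'' s) s)
    (hpos : ∀ s, 0 < g s) (hcs : ∀ s, g' s ^ 2 ≤ g s * g'' s) :
    ConvexOn ℝ Set.univ (fun s => Real.log (g s)) := by
  refine convexOn_of_hasDerivWithinAt2_nonneg convex_univ
    (fun s _ => ((hg s).log (hpos s).ne').continuousAt.continuousWithinAt)
    (fun s _ => ((hg s).log (hpos s).ne').hasDerivWithinAt)
    (fun s _ => ((hg' s).div (hg s) (hpos s).ne').hasDerivWithinAt) fun s _ => ?_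
  have := hcs s
  exact div_nonneg (by nlinarith [hpos s]) (sq_nonneg _)

lemma le_rpow_mul_rpow_of_convexOn_log {E : Type*} [AddCommGroup E] [Module ℝ E] {s : Set E}
    {f : E → ℝ} (hf : ConvexOn ℝ s (fun x => Real.log (f x))) (hpos : ∀ x ∈ s, 0 < f x)
    {x y : E} (hx : x ∈ s) (hy : y ∈ s) {a b : ℝ} (ha : 0 ≤ a) (hb : 0 ≤ b) (hab : a + b = 1) :
    f (a • x + b • y) ≤ f x ^ a * f y ^ b := by
  have hfx := hpos x hx
  have hfy := hpos y hy
  rw [← Real.log_le_log_iff (hpos _ (hf.1 hx hy ha hb hab)) (by positivity),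
    Real.log_mul (by positivity) (by positivity), Real.log_rpow hfx, Real.log_rpow hfy]
  exact hf.2 hx hy ha hb hab

lemma convexOn_log_norm_of_hasDerivAt {H : Type*} [NormedAddCommGroup H] [InnerProductSpace ℝ H]
    {A : H →L[ℝ] H} (hA : (A : H →ₗ[ℝ] H).IsSymmetric)
    {v : ℝ → H} (hv : ∀ s, HasDerivAt v (A (v s)) s) (hv₀ : ∀ s, v s ≠ 0) :
    ConvexOn ℝ Set.univ (fun s => Real.log ‖v s‖) := by
  have hnorm : ∀ s, HasDerivAt (fun r => ‖v r‖ ^ 2) (2 * ⟪A (v s), v s⟫) s := fun s => by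
    simpa [real_inner_comm] using (hv s).norm_sq
  have hform : ∀ s, HasDerivAt (fun r => 2 * ⟪A (v r), v r⟫) (4 * ‖A (v s)‖ ^ 2) s := fun s => by
    have hAv : HasDerivAt (fun r => A (v r)) (A (A (v s))) s :=
      A.hasFDerivAt.comp_hasDerivAt s (hv s)
    have hsymm : ⟪A (A (v s)), v s⟫ = ⟪A (v s), A (v s)⟫ := hA (A (v s)) (v s)
    refine ((hAv.inner ℝ (hv s)).const_mul 2).congr_deriv ?_
    rw [hsymm, real_inner_self_eq_norm_sq]
    ring
  have hcs : ∀ s, (2 * ⟪A (v s), v s⟫) ^ 2 ≤ ‖v s‖ ^ 2 * (4 * ‖A (v s)‖ ^ 2) := fun s => by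
    have := abs_real_inner_le_norm (A (v s)) (v s)
    nlinarith [abs_nonneg ⟪A (v s), v s⟫, sq_abs ⟪A (v s), v s⟫]
  have hsq := convexOn_log_of_hasDerivAt hnorm hform (fun s => by have := hv₀ s; positivity) hcs
  refine (hsq.smul (by norm_num : (0 : ℝ) ≤ 1 / 2)).congr fun s _ => ?_
  simp [Real.log_pow]

section Exponential

variable {E : Type*} [NormedAddCommGroup E] [NormedSpace ℝ E] [CompleteSpace E]

lemma hasDerivAt_exp_smul_apply (A : E →L[ℝ] E) (x : E) (s : ℝ) :
    HasDerivAt (fun r : ℝ => NormedSpace.exp (r • A) x) (A (NormedSpace.exp (s • A) x)) s :=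
  (hasDerivAt_exp_smul_const' A s).clm_apply (hasDerivAt_const s x) |>.congr_deriv (by simp)

lemma exp_apply_ne_zero (A : E →L[ℝ] E) {x : E} (hx : x ≠ 0) : NormedSpace.exp A x ≠ 0 := by
  obtain ⟨B, hB⟩ := (NormedSpace.isUnit_exp_of_mem_ball (𝕂 := ℝ)
    ((NormedSpace.expSeries_radius_eq_top ℝ (E →L[ℝ] E)).symm ▸ edist_lt_top A 0)).exists_left_inv
  intro h
  have hBx := congr($hB x)
  simp only [mul_apply_eq_comp, h, map_zero, one_apply_eq_self] at hBx
  exact hx hBx.symm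

end Exponential

theorem log_convexity_selfAdjoint_general {H : Type*} [NormedAddCommGroup H]
    [InnerProductSpace ℝ H] [CompleteSpace H]
    (A : H →L[ℝ] H) (hA : IsSelfAdjoint A)
    (θ M : ℝ) (hθ : 0 < θ) (u₀ : H) (hu₀ : ‖u₀‖ ≤ M)
    (u : ℝ → H) (hu : ∀ t, u t = NormedSpace.exp (t • A) u₀)
    (t : ℝ) (ht : 0 ≤ t) (ht' : t ≤ θ) :
    ‖u t‖ ≤ M ^ (1 - t / θ) * ‖u θ‖ ^ (t / θ) := by
  obtain rfl : u = fun t => NormedSpace.exp (t • A) u₀ := funext hu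
  have hM : 0 ≤ M := (norm_nonneg u₀).trans hu₀
  rcases eq_or_ne u₀ 0 with rfl | hu₀_ne
  · simp only [map_zero, norm_zero]
    positivity
  have hconv := convexOn_log_norm_of_hasDerivAt hA.isSymmetric
    (hasDerivAt_exp_smul_apply A u₀) fun s => exp_apply_ne_zero _ hu₀_ne
  have hb : 0 ≤ t / θ := div_nonneg ht hθ.le
  have ha : 0 ≤ 1 - t / θ := sub_nonneg.mpr ((div_le_one hθ).mpr ht')
  have htθ : (1 - t / θ) • (0 : ℝ) + (t / θ) • θ = t := by
    rw [smul_zero, zero_add, smul_eq_mul, div_mul_cancel₀ t hθ.ne']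
  calc ‖NormedSpace.exp (t • A) u₀‖
      ≤ ‖NormedSpace.exp ((0 : ℝ) • A) u₀‖ ^ (1 - t / θ)
          * ‖NormedSpace.exp (θ • A) u₀‖ ^ (t / θ) := by
        simpa only [htθ] using le_rpow_mul_rpow_of_convexOn_log hconv
          (fun s _ => norm_pos_iff.mpr (exp_apply_ne_zero _ hu₀_ne)) (Set.mem_univ 0)
          (Set.mem_univ θ) ha hb (by ring)
    _ ≤ M ^ (1 - t / θ) * ‖NormedSpace.exp (θ • A) u₀‖ ^ (t / θ) := by
        gcongr
        simpa using hu₀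

/-- Logarithmic convexity for self-adjoint semigroups: if `A` is self-adjoint and bounded
above (quadratic form bounded above), then `t ↦ ‖e^{tA} u₀‖` is log-convex. -/
theorem log_convexity_selfAdjoint {H : Type*} [NormedAddCommGroup H]
    [InnerProductSpace ℝ H] [CompleteSpace H]
    (A : H →L[ℝ] H) (hA : IsSelfAdjoint A)
    (c : ℝ) (hbdd : ∀ x : H, inner ℝ (A x) x ≤ c * ‖x‖ ^ 2)
    (θ M : ℝ) (hθ : 0 < θ) (hM : 0 < M) (u₀ : H) (hu₀ : ‖u₀‖ ≤ M)
    (u : ℝ → H) (hu : ∀ t, u t = NormedSpace.exp (t • A) u₀)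
    (t : ℝ) (ht : 0 ≤ t) (ht' : t ≤ θ) :
    ‖u t‖ ≤ M ^ (1 - t / θ) * ‖u θ‖ ^ (t / θ) :=
  log_convexity_selfAdjoint_general A hA θ M hθ u₀ hu₀ u hu t ht ht'
end

section
/- For B = [[−1, 2], [0, −1]], the matrix Q_∞ = ∫_0^∞ e^{sB} e^{sB*} ds satisfies 2‖(1/2)I₂ + Q_∞ B*‖ = 1 (operator norm), so the spectral angle arctan of this quantity equals π/4. -/
/-!
Write `B = -I + N` with `N = [[0, 2], [0, 0]]`, so `N² = 0` and `e^{sB} = e^{-s} (I + sN)`. The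
integrand `e^{sB} e^{sBᵀ} = e^{-2s} (I + s(N + Nᵀ) + s² N Nᵀ)` is then integrated entrywise with
`∫₀^∞ tᵏ e^{-2t} dt = k! / 2^{k+1}`, giving `Q_∞ = [[3/2, 1/2], [1/2, 1/2]]`. Hence
`M = (1/2) I + Q_∞ Bᵀ = [[0, -1/2], [1/2, 0]]` is half a rotation: `MᵀM = I/4`, and the
C*-identity `‖MᵀM‖ = ‖M‖²` gives `‖M‖ = 1/2`.
-/

open Matrix MeasureTheory Set

/-- `Q_∞ = ∫_0^∞ e^{sB} e^{sB^*} ds`, defined entrywise. -/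
noncomputable def Qinf (B : Matrix (Fin 2) (Fin 2) ℝ) : Matrix (Fin 2) (Fin 2) ℝ :=
  Matrix.of fun i j =>
    ∫ s in Set.Ioi (0:ℝ), (NormedSpace.exp (s • B) * (NormedSpace.exp (s • B))ᵀ) i j

theorem NormedSpace.exp_eq_one_add_of_mul_self_eq_zero {𝔸 : Type*} [NormedRing 𝔸]
    [NormedAlgebra ℝ 𝔸] {N : 𝔸} (hN : N * N = 0) :
    NormedSpace.exp N = 1 + N := by
  rw [NormedSpace.exp_eq_tsum ℝ]
  beta_reduce
  rw [tsum_eq_sum (s := Finset.range 2)]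
  · simp [Finset.sum_range_succ]
  · intro n hn
    obtain ⟨k, rfl⟩ : ∃ k, n = k + 2 := ⟨n - 2, by simp at hn; omega⟩
    simp [pow_add, sq, hN]

theorem NormedSpace.exp_smul_smul_one_add {𝔸 : Type*} [NormedRing 𝔸] [NormedAlgebra ℝ 𝔸]
    [CompleteSpace 𝔸] {N : 𝔸} (hN : N * N = 0) (a s : ℝ) :
    NormedSpace.exp (s • (a • 1 + N)) = Real.exp (s * a) • (1 + s • N) := by
  let +nondep : NormedAlgebra ℚ 𝔸 := .restrictScalars ℚ ℝ 𝔸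
  have hsN : (s • N) * (s • N) = 0 := by simp [hN]
  rw [smul_add, smul_smul, NormedSpace.exp_add_of_commute ((Commute.one_left _).smul_left _),
    NormedSpace.exp_eq_one_add_of_mul_self_eq_zero hsN, ← Algebra.algebraMap_eq_smul_one,
    ← NormedSpace.algebraMap_exp_comm, Real.exp_eq_exp_ℝ, ← Algebra.smul_def]

theorem integral_Ioi_pow_mul_exp_neg_mul (n : ℕ) {r : ℝ} (hr : 0 < r) :
    ∫ t in Ioi (0:ℝ), t ^ n * Real.exp (-(r * t)) = n.factorial / r ^ (n + 1) := by
  have h := Real.integral_rpow_mul_exp_neg_mul_Ioi (a := n + 1) (n.cast_add_one_pos) hr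
  simp only [add_sub_cancel_right, Real.rpow_natCast, Real.Gamma_nat_eq_factorial] at h
  rw [h]
  norm_cast
  rw [_root_.one_div_pow]
  ring

theorem integrableOn_Ioi_pow_mul_exp_neg_mul (n : ℕ) {r : ℝ} (hr : 0 < r) :
    IntegrableOn (fun t : ℝ => t ^ n * Real.exp (-(r * t))) (Ioi 0) := by
  simpa [Real.rpow_natCast] using integrableOn_rpow_mul_exp_neg_mul_rpow (p := 1) (s := n)
    (by linarith [n.cast_nonneg (α := ℝ)]) one_pos hr

open scoped Matrix.Norms.L2Operator

theorem Matrix.norm_toEuclideanCLM_of_conjTranspose_mul_self {n 𝕜 : Type*} [Fintype n]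
    [DecidableEq n] [Nonempty n] [RCLike 𝕜] {A : Matrix n n 𝕜} {r : ℝ} (hr : 0 ≤ r)
    (hA : Aᴴ * A = ((r ^ 2 : ℝ) : 𝕜) • 1) : ‖toEuclideanCLM (𝕜 := 𝕜) A‖ = r := by
  rw [← cstar_norm_def]
  have h : ‖A‖ ^ 2 = r ^ 2 := by
    rw [sq, ← l2_opNorm_conjTranspose_mul_self, hA, norm_smul, norm_one, mul_one,
      RCLike.norm_ofReal, abs_of_nonneg (sq_nonneg r)]
  exact (pow_left_inj₀ (norm_nonneg A) hr two_ne_zero).1 h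

theorem Matrix.exp_smul_mul_transpose_exp_smul {n : Type*} [Fintype n] [DecidableEq n]
    {N : Matrix n n ℝ} (hN : N * N = 0) (a s : ℝ) :
    NormedSpace.exp (s • (a • 1 + N)) * (NormedSpace.exp (s • (a • 1 + N)))ᵀ =
      Real.exp (2 * a * s) • (1 + s • (N + Nᵀ) + s ^ 2 • (N * Nᵀ)) := by
  rw [NormedSpace.exp_smul_smul_one_add hN, transpose_smul, smul_mul_smul, ← Real.exp_add]
  congr 1
  · ring_nf
  · simp only [transpose_add, transpose_one, transpose_smul, add_mul, mul_add, one_mul, mul_one,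
      smul_mul_smul, smul_add, sq]
    abel

theorem Matrix.of_integral_Ioi_exp_smul_quadratic {m n : Type*} {r : ℝ} (hr : 0 < r)
    (P₀ P₁ P₂ : Matrix m n ℝ) :
    Matrix.of (fun i j => ∫ t in Ioi (0:ℝ),
        (Real.exp (-(r * t)) • (P₀ + t • P₁ + t ^ 2 • P₂)) i j) =
      r⁻¹ • P₀ + (r ^ 2)⁻¹ • P₁ + (2 / r ^ 3) • P₂ := by
  have hI : ∀ (k : ℕ) (c : ℝ), IntegrableOn (fun t => t ^ k * Real.exp (-(r * t)) * c) (Ioi 0) :=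
    fun k c => (integrableOn_Ioi_pow_mul_exp_neg_mul k hr).mul_const c
  ext i j
  simp only [of_apply, add_apply, smul_apply, smul_eq_mul]
  have hsplit : ∀ t : ℝ, Real.exp (-(r * t)) * (P₀ i j + t * P₁ i j + t ^ 2 * P₂ i j) =
      t ^ 0 * Real.exp (-(r * t)) * P₀ i j + t ^ 1 * Real.exp (-(r * t)) * P₁ i j +
        t ^ 2 * Real.exp (-(r * t)) * P₂ i j := fun t => by ring
  simp_rw [hsplit]
  rw [integral_add, integral_add, integral_mul_const, integral_mul_const, integral_mul_const,
    integral_Ioi_pow_mul_exp_neg_mul 0 hr, integral_Ioi_pow_mul_exp_neg_mul 1 hr,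
    integral_Ioi_pow_mul_exp_neg_mul 2 hr]
  · norm_num [Nat.factorial]
  exacts [hI 0 _, hI 1 _, (hI 0 _).add (hI 1 _), hI 2 _]

theorem Qinf_smul_one_add {N : Matrix (Fin 2) (Fin 2) ℝ} (hN : N * N = 0) {a : ℝ} (ha : a < 0) :
    Qinf (a • 1 + N) = (-(2 * a))⁻¹ • 1 + ((-(2 * a)) ^ 2)⁻¹ • (N + Nᵀ) +
      (2 / (-(2 * a)) ^ 3) • (N * Nᵀ) := by
  have hexp : ∀ s : ℝ, Real.exp (2 * a * s) = Real.exp (-(-(2 * a) * s)) := fun s => by ring_nf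
  simp only [Qinf, Matrix.exp_smul_mul_transpose_exp_smul hN, hexp]
  exact Matrix.of_integral_Ioi_exp_smul_quadratic (by linarith) _ _ _

theorem Qinf_example : Qinf !![-1, 2; 0, -1] = !![3/2, 1/2; 1/2, 1/2] := by
  have hB : (!![-1, 2; 0, -1] : Matrix (Fin 2) (Fin 2) ℝ) = (-1 : ℝ) • 1 + !![0, 2; 0, 0] := by
    ext i j; fin_cases i <;> fin_cases j <;> norm_num
  have hN : (!![0, 2; 0, 0] : Matrix (Fin 2) (Fin 2) ℝ) * !![0, 2; 0, 0] = 0 := by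
    ext i j; fin_cases i <;> fin_cases j <;> norm_num [mul_apply]
  rw [hB, Qinf_smul_one_add hN (by norm_num)]
  ext i j; fin_cases i <;> fin_cases j <;> norm_num [vecMul, dotProduct, Fin.sum_univ_two]

/-- For `B = [[-1, 2], [0, -1]]`, `2‖(1/2)I₂ + Q_∞ Bᵀ‖ = 1` in the operator norm induced
by the Euclidean norm on `ℝ²`, so the spectral angle `arctan` of this quantity is `π/4`. -/
theorem example_spectral_angle :
    let B : Matrix (Fin 2) (Fin 2) ℝ := !![-1, 2; 0, -1]
    let M : Matrix (Fin 2) (Fin 2) ℝ := (1 / 2 : ℝ) • (1 : Matrix (Fin 2) (Fin 2) ℝ) +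
      Qinf B * Bᵀ
    2 * ‖Matrix.toEuclideanCLM (𝕜 := ℝ) M‖ = 1 ∧
      Real.arctan (2 * ‖Matrix.toEuclideanCLM (𝕜 := ℝ) M‖) = Real.pi / 4 := by
  intro B M
  have hM : M = !![0, -(1/2); 1/2, 0] := by
    simp only [M, B, Qinf_example]
    ext i j; fin_cases i <;> fin_cases j <;> norm_num [vecMul, dotProduct, Fin.sum_univ_two]
  have hMM : Mᴴ * M = (1 / 2 : ℝ) ^ 2 • 1 := by
    rw [hM]
    ext i j; fin_cases i <;> fin_cases j <;> norm_num [mul_apply, Fin.sum_univ_two]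
  have hnorm : 2 * ‖toEuclideanCLM (𝕜 := ℝ) M‖ = 1 := by
    rw [norm_toEuclideanCLM_of_conjTranspose_mul_self (by norm_num) hMM]
    norm_num
  exact ⟨hnorm, by rw [hnorm, Real.arctan_one]⟩
end

section
/- Let θ > 0, φ > 0, c > 0 and σ > 0, and define r(x) = [(Γ(1/φ) − Γ(1/φ, −c log(σx))) / (−c log(σx))^{1/φ}] · [(−c log x)^{1/φ} / (Γ(1/φ) − Γ(1/φ, −c log x))] for 0 < x < min(1, 1/σ). Then r is monotone: non-decreasing if σ > 1 and non-increasing if σ < 1. -/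
open Real MeasureTheory Set

/-- The upper incomplete Gamma function `Γ(a,x) = ∫_x^∞ s^(a-1) e^(-s) ds`. -/
noncomputable def upperGamma (a x : ℝ) : ℝ :=
  ∫ s in Set.Ioi x, s ^ (a - 1) * Real.exp (-s)

/-!
With `a = 1/φ` and `y > 0`, the substitution `s = y u` gives
`Γ(a) - Γ(a, y) = y^a M(-y)`, where `M` is the moment generating function of the identity
under the measure `u^(a-1) du` on `(0, 1]`. Hence `r(x) = M(t + c log σ) / M(t)` with
`t = c log x` increasing in `x`. The cumulant generating function `log M` is convex (its second
derivative is a variance), so `t ↦ log M(t + h) - log M(t)` is monotone for `h ≥ 0` and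
antitone for `h ≤ 0`.
-/

open ProbabilityTheory

lemma convexOn_cgf {Ω : Type*} [MeasurableSpace Ω] {X : Ω → ℝ} {μ : Measure Ω}
    (h : ∀ t, Integrable (fun ω ↦ exp (t * X ω)) μ) : ConvexOn ℝ univ (cgf X μ) := by
  have hint : interior (integrableExpSet X μ) = univ := by
    rw [show integrableExpSet X μ = univ from eq_univ_of_forall h, interior_univ]
  have hana : ∀ t, AnalyticAt ℝ (cgf X μ) t := fun t ↦ analyticAt_cgf (by simp [hint])
  refine convexOn_univ_of_deriv2_nonneg (fun t ↦ (hana t).differentiableAt)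
    (fun t ↦ (hana t).deriv.differentiableAt) fun t ↦ ?_
  rw [← iteratedDeriv_eq_iterate, iteratedDeriv_two_cgf_eq_integral (by simp [hint])]
  exact div_nonneg (integral_nonneg fun ω ↦ by positivity) mgf_nonneg

lemma ConvexOn.monotone_add_sub {f : ℝ → ℝ} (hf : ConvexOn ℝ univ f) {h : ℝ} (hh : 0 ≤ h) :
    Monotone (fun t ↦ f (t + h) - f t) := by
  intro s t hst
  rcases hh.eq_or_lt with rfl | hh
  · simp
  have h1 : slope f s (s + h) ≤ slope f s (t + h) :=
    hf.slope_mono (mem_univ s) ⟨mem_univ _, by simpa using hh.ne'⟩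
      ⟨mem_univ _, by simp; linarith⟩ (by linarith)
  have h2 : slope f (t + h) s ≤ slope f (t + h) t :=
    hf.slope_mono (mem_univ _) ⟨mem_univ _, by simp; linarith⟩
      ⟨mem_univ _, by simpa using hh.ne'⟩ hst
  rw [slope_comm f (t + h) s, slope_comm f (t + h) t] at h2
  have := h1.trans h2
  simp only [slope_def_field, add_sub_cancel_left] at this
  exact (div_le_div_iff_of_pos_right hh).mp this

lemma ConvexOn.antitone_add_sub {f : ℝ → ℝ} (hf : ConvexOn ℝ univ f) {h : ℝ} (hh : h ≤ 0) :
    Antitone (fun t ↦ f (t + h) - f t) := by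
  intro s t hst
  have := hf.monotone_add_sub (neg_nonneg.mpr hh) (show s + h ≤ t + h by linarith)
  simp only [add_neg_cancel_right] at this
  linarith

section mgf

variable {Ω : Type*} [MeasurableSpace Ω] {X : Ω → ℝ} {μ : Measure Ω}

lemma mgf_add_div_mgf_eq_exp (h : ∀ t, Integrable (fun ω ↦ exp (t * X ω)) μ) (hμ : μ ≠ 0)
    (t s : ℝ) : mgf X μ (t + s) / mgf X μ t = exp (cgf X μ (t + s) - cgf X μ t) := by
  have := NeZero.mk hμ
  rw [exp_sub, exp_cgf (h _), exp_cgf (h _)]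

lemma monotone_mgf_add_div_mgf (h : ∀ t, Integrable (fun ω ↦ exp (t * X ω)) μ) {s : ℝ}
    (hs : 0 ≤ s) : Monotone fun t ↦ mgf X μ (t + s) / mgf X μ t := by
  rcases eq_or_ne μ 0 with rfl | hμ
  · simpa using monotone_const
  simp only [mgf_add_div_mgf_eq_exp h hμ]
  exact exp_monotone.comp ((convexOn_cgf h).monotone_add_sub hs)

lemma antitone_mgf_add_div_mgf (h : ∀ t, Integrable (fun ω ↦ exp (t * X ω)) μ) {s : ℝ}
    (hs : s ≤ 0) : Antitone fun t ↦ mgf X μ (t + s) / mgf X μ t := by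
  rcases eq_or_ne μ 0 with rfl | hμ
  · simpa using antitone_const
  simp only [mgf_add_div_mgf_eq_exp h hμ]
  exact exp_monotone.comp_antitone ((convexOn_cgf h).antitone_add_sub hs)

end mgf

noncomputable def unitRpowMeasure (a : ℝ) : Measure ℝ :=
  (volume.restrict (Ioc 0 1)).withDensity fun u ↦ ENNReal.ofReal (u ^ (a - 1))

lemma toReal_ofReal_rpow_smul_ae_eq (a : ℝ) (g : ℝ → ℝ) :
    (fun u ↦ (ENNReal.ofReal (u ^ (a - 1))).toReal • g u)
      =ᵐ[volume.restrict (Ioc 0 1)] fun u ↦ u ^ (a - 1) * g u := by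
  filter_upwards [ae_restrict_mem measurableSet_Ioc] with u hu
  rw [ENNReal.toReal_ofReal (rpow_nonneg hu.1.le _), smul_eq_mul]

lemma mgf_id_unitRpowMeasure (a t : ℝ) :
    mgf id (unitRpowMeasure a) t = ∫ u in Ioc 0 1, u ^ (a - 1) * exp (t * u) := by
  rw [mgf, unitRpowMeasure, integral_withDensity_eq_integral_toReal_smul (by fun_prop)
    (ae_of_all _ fun _ ↦ ENNReal.ofReal_lt_top)]
  exact integral_congr_ae (toReal_ofReal_rpow_smul_ae_eq a _)

lemma integrable_exp_mul_unitRpowMeasure {a : ℝ} (ha : 0 < a) (t : ℝ) :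
    Integrable (fun u ↦ exp (t * id u)) (unitRpowMeasure a) := by
  rw [unitRpowMeasure, integrable_withDensity_iff_integrable_smul' (by fun_prop)
    (ae_of_all _ fun _ ↦ ENNReal.ofReal_lt_top)]
  refine Integrable.congr ?_ (toReal_ofReal_rpow_smul_ae_eq a _).symm
  exact (intervalIntegrable_iff_integrableOn_Ioc_of_le zero_le_one).mp <|
    (intervalIntegral.intervalIntegrable_rpow' (by linarith)).mul_continuousOn (by fun_prop)

lemma Gamma_sub_upperGamma_eq_integral {a : ℝ} (ha : 0 < a) {y : ℝ} (hy : 0 ≤ y) :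
    Gamma a - upperGamma a y = ∫ s in Ioc 0 y, s ^ (a - 1) * exp (-s) := by
  have hint : IntegrableOn (fun s ↦ s ^ (a - 1) * exp (-s)) (Ioi 0) :=
    (GammaIntegral_convergent ha).congr_fun (fun _ _ ↦ mul_comm _ _) measurableSet_Ioi
  rw [Gamma_eq_integral ha]
  simp only [mul_comm (exp _)]
  rw [upperGamma, ← Ioc_union_Ioi_eq_Ioi hy,
    setIntegral_union (Ioc_disjoint_Ioi le_rfl) measurableSet_Ioi
      (hint.mono_set Ioc_subset_Ioi_self) (hint.mono_set (Ioi_subset_Ioi hy)),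
    add_sub_cancel_right]

lemma integral_Ioc_rpow_mul_exp_neg {a y : ℝ} (hy : 0 < y) :
    ∫ s in Ioc 0 y, s ^ (a - 1) * exp (-s) =
      y ^ a * ∫ u in Ioc 0 1, u ^ (a - 1) * exp (-y * u) := by
  rw [← intervalIntegral.integral_of_le hy.le, ← intervalIntegral.integral_of_le zero_le_one]
  calc ∫ s in 0..y, s ^ (a - 1) * exp (-s)
      = y * ∫ u in 0..1, (y * u) ^ (a - 1) * exp (-(y * u)) := by
        simpa using (intervalIntegral.smul_integral_comp_mul_left
          (fun s ↦ s ^ (a - 1) * exp (-s)) y (a := 0) (b := 1)).symm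
    _ = y * ∫ u in 0..1, y ^ (a - 1) * (u ^ (a - 1) * exp (-y * u)) := by
        congr 1
        refine intervalIntegral.integral_congr fun u hu ↦ ?_
        rw [uIcc_of_le zero_le_one] at hu
        simp only [mul_rpow hy.le hu.1, neg_mul]
        ring
    _ = y ^ a * ∫ u in 0..1, u ^ (a - 1) * exp (-y * u) := by
        rw [intervalIntegral.integral_const_mul, ← mul_assoc, rpow_sub_one hy.ne',
          mul_div_cancel₀ _ hy.ne']

lemma Gamma_sub_upperGamma_eq_mul_mgf {a y : ℝ} (ha : 0 < a) (hy : 0 < y) :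
    Gamma a - upperGamma a y = y ^ a * mgf id (unitRpowMeasure a) (-y) := by
  rw [Gamma_sub_upperGamma_eq_integral ha hy.le, integral_Ioc_rpow_mul_exp_neg hy,
    mgf_id_unitRpowMeasure]

theorem r_monotone_general (φ c σ : ℝ) (hφ : 0 < φ) (hc : 0 < c) (hσ : 0 < σ) :
    let r : ℝ → ℝ := fun x =>
      (Real.Gamma (1 / φ) - upperGamma (1 / φ) (-c * Real.log (σ * x))) /
          (-c * Real.log (σ * x)) ^ (1 / φ) *
        ((-c * Real.log x) ^ (1 / φ) /
          (Real.Gamma (1 / φ) - upperGamma (1 / φ) (-c * Real.log x)))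
    (σ > 1 → MonotoneOn r (Set.Ioo 0 (min 1 (1 / σ)))) ∧
      (σ < 1 → AntitoneOn r (Set.Ioo 0 (min 1 (1 / σ)))) := by
  intro r
  have ha : 0 < 1 / φ := by positivity
  set M := mgf id (unitRpowMeasure (1 / φ))
  have hr : ∀ x ∈ Ioo 0 (min 1 (1 / σ)), r x = M (c * log x + c * log σ) / M (c * log x) := by
    rintro x ⟨hx, hxσ⟩
    have hlog : log x < 0 := log_neg hx (hxσ.trans_le (min_le_left _ _))
    have hlogσ : log (σ * x) < 0 :=
      log_neg (by positivity) ((lt_div_iff₀' hσ).mp (hxσ.trans_le (min_le_right _ _)))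
    have hy₁ : 0 < -c * log (σ * x) := by nlinarith
    have hy₂ : 0 < -c * log x := by nlinarith
    dsimp only [r]
    rw [Gamma_sub_upperGamma_eq_mul_mgf ha hy₁, Gamma_sub_upperGamma_eq_mul_mgf ha hy₂,
      mul_div_cancel_left₀ _ (rpow_pos_of_pos hy₁ _).ne',
      div_mul_cancel_left₀ (rpow_pos_of_pos hy₂ _).ne', ← div_eq_mul_inv, log_mul hσ.ne' hx.ne']
    congr 2 <;> ring
  have hlog_mono : MonotoneOn (fun x ↦ c * log x) (Ioo 0 (min 1 (1 / σ))) :=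
    fun x hx y _ hxy ↦ mul_le_mul_of_nonneg_left (log_le_log hx.1 hxy) hc.le
  refine ⟨fun hσ1 x hx y hy hxy ↦ ?_, fun hσ1 x hx y hy hxy ↦ ?_⟩
  · rw [hr x hx, hr y hy]
    exact monotone_mgf_add_div_mgf (integrable_exp_mul_unitRpowMeasure ha)
      (by have := log_pos hσ1; positivity) (hlog_mono hx hy hxy)
  · rw [hr x hx, hr y hy]
    exact antitone_mgf_add_div_mgf (integrable_exp_mul_unitRpowMeasure ha)
      (mul_nonpos_of_nonneg_of_nonpos hc.le (log_nonpos hσ.le hσ1.le)) (hlog_mono hx hy hxy)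

/-- Monotonicity of
`r(x) = [(Γ(1/φ) - Γ(1/φ, -c log(σx))) / (-c log(σx))^{1/φ}] ·
        [(-c log x)^{1/φ} / (Γ(1/φ) - Γ(1/φ, -c log x))]`:
non-decreasing if `σ > 1`, non-increasing if `σ < 1`. -/
theorem r_monotone (θ φ c σ : ℝ) (hθ : 0 < θ) (hφ : 0 < φ) (hc : 0 < c) (hσ : 0 < σ) :
    let r : ℝ → ℝ := fun x =>
      (Real.Gamma (1 / φ) - upperGamma (1 / φ) (-c * Real.log (σ * x))) /
          (-c * Real.log (σ * x)) ^ (1 / φ) *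
        ((-c * Real.log x) ^ (1 / φ) /
          (Real.Gamma (1 / φ) - upperGamma (1 / φ) (-c * Real.log x)))
    (σ > 1 → MonotoneOn r (Set.Ioo 0 (min 1 (1 / σ)))) ∧
      (σ < 1 → AntitoneOn r (Set.Ioo 0 (min 1 (1 / σ)))) :=
  r_monotone_general φ c σ hφ hc hσ
end
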